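/- Adding the edge {0, 1+α+α²} (i.e., {0, α^10}) to G creates an induced path on 6 vertices: in the modified graph, the vertices 1+α+α², 0, α+α³, α, α+α²+α³, α² form an induced P₆. -/

import Mathlib

/-!
In characteristic 2 a root `α` of `X⁴ + X + 1` has multiplicative order 15, so it generates
`𝔽₁₆ˣ` and `α ^ k` is a nonzero cube exactly when `3 ∣ k`. The six vertices are
`α¹⁰, 0, α⁹, α, α¹¹, α²`; consecutive ones differ by `α¹⁰, α⁹, α³, α⁶, α⁹`, and all other pairs
by powers `α ^ k` with `3 ∤ k`. So the Cayley graph contains exactly the path edges except the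
first, which is the added edge `{0, α¹⁰}`.
-/

open SimpleGraph

/-- The set of nonzero cubes in a field. -/
def cubes (F : Type) [Field F] : Set F := {s | ∃ x : F, x ≠ 0 ∧ x ^ 3 = s}

/-- The Cayley graph on `F` with connection set the nonzero cubes:
`x ~ y` iff `x - y` is a nonzero cube. -/
def cayley (F : Type) [Field F] : SimpleGraph F :=
  SimpleGraph.fromRel (fun x y => x - y ∈ cubes F)

/-- `v : Fin n → V` is an induced path on `n` vertices in `G`. -/
def IsInducedPath {V : Type} (G : SimpleGraph V) {n : ℕ} (v : Fin n → V) : Prop :=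
  Function.Injective v ∧
    ∀ i j : Fin n, G.Adj (v i) (v j) ↔ (i.val + 1 = j.val ∨ j.val + 1 = i.val)

section Cubes

variable {F : Type} [Field F]

lemma zero_notMem_cubes : (0 : F) ∉ cubes F :=
  fun ⟨_, hz, h⟩ => hz (pow_eq_zero_iff three_ne_zero |>.mp h)

lemma neg_mem_cubes {x : F} (hx : x ∈ cubes F) : -x ∈ cubes F := by
  obtain ⟨z, hz, rfl⟩ := hx
  exact ⟨-z, neg_ne_zero.mpr hz, Odd.neg_pow (by decide) z⟩

lemma cayley_adj_iff {x y : F} : (cayley F).Adj x y ↔ x - y ∈ cubes F := by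
  rw [cayley, fromRel_adj, ← neg_sub x y]
  refine ⟨fun ⟨_, h⟩ => h.elim id fun h => neg_neg (x - y) ▸ neg_mem_cubes h, fun h => ?_⟩
  exact ⟨sub_ne_zero.mp (ne_of_mem_of_not_mem h zero_notMem_cubes), Or.inl h⟩

lemma pow_mem_cubes_iff [Fintype F] (h3 : 3 ∣ Fintype.card F - 1) {a : F}
    (ha : orderOf a = Fintype.card F - 1) (k : ℕ) : a ^ k ∈ cubes F ↔ 3 ∣ k := by
  have hq : 0 < Fintype.card F - 1 := Nat.sub_pos_of_lt Fintype.one_lt_card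
  obtain ⟨m, hm⟩ := h3
  constructor
  · rintro ⟨y, hy, hyk⟩
    have hkm : a ^ (k * m) = 1 := by
      rw [pow_mul, ← hyk, ← pow_mul, ← hm, FiniteField.pow_card_sub_one_eq_one y hy]
    have := orderOf_dvd_of_pow_eq_one hkm
    rw [ha, hm] at this
    exact Nat.dvd_of_mul_dvd_mul_right (by omega) this
  · rintro ⟨j, rfl⟩
    have ha0 : a ≠ 0 := by
      rintro rfl
      have h := pow_orderOf_eq_one (0 : F)
      rw [ha, zero_pow hq.ne'] at h
      exact zero_ne_one h
    exact ⟨a ^ j, pow_ne_zero j ha0, by rw [← pow_mul, mul_comm]⟩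

end Cubes

section CharTwo

variable {R : Type} [CommRing R] [CharP R 2] {a : R}

lemma orderOf_eq_fifteen [Nontrivial R] (ha : a ^ 4 + a + 1 = 0) : orderOf a = 15 := by
  refine orderOf_eq_of_pow_and_pow_div_prime (by norm_num) (by grind) fun p hp hdvd => ?_
  obtain rfl | rfl : p = 3 ∨ p = 5 := by
    have := Nat.le_of_dvd (by norm_num) hdvd
    interval_cases p <;> first | omega | norm_num at hp
  all_goals norm_num; grind

def pathVertex (a : R) : Fin 6 → R := ![1 + a + a ^ 2, 0, a + a ^ 3, a, a + a ^ 2 + a ^ 3, a ^ 2]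

def pathVertexLog : Fin 6 → Fin 6 → ℕ :=
  ![![0, 10, 13, 8, 14, 4], ![10, 0, 9, 1, 11, 2], ![13, 9, 0, 3, 2, 11],
    ![8, 1, 3, 0, 6, 5], ![14, 11, 2, 6, 0, 9], ![4, 2, 11, 5, 9, 0]]

lemma pathVertex_sub_eq_pow (ha : a ^ 4 + a + 1 = 0) {i j : Fin 6} (hij : i ≠ j) :
    pathVertex a i - pathVertex a j = a ^ pathVertexLog i j := by
  fin_cases i <;> fin_cases j <;> first
    | exact absurd rfl hij
    | (simp only [pathVertex, pathVertexLog, Fin.mk_one, Fin.zero_eta, Fin.reduceFinMk,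
        Matrix.cons_val]; grind)

end CharTwo

theorem stmt10 (F : Type) [Field F] [Fintype F] (hF : Fintype.card F = 16)
    (a : F) (ha : a ^ 4 + a + 1 = 0) :
    IsInducedPath (cayley F ⊔ SimpleGraph.fromEdgeSet {s((0 : F), 1 + a + a ^ 2)})
      ![1 + a + a ^ 2, 0, a + a ^ 3, a, a + a ^ 2 + a ^ 3, a ^ 2] := by
  have : CharP F 2 := charP_of_card_eq_prime_pow (f := 4) hF
  have ha0 : a ≠ 0 := by rintro rfl; norm_num at ha
  have hinj : Function.Injective (pathVertex a) := fun i j hv => by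
    by_contra hij
    exact pow_ne_zero _ ha0 (by rw [← pathVertex_sub_eq_pow ha hij, hv, sub_self])
  change IsInducedPath (cayley F ⊔ edge (pathVertex a 1) (pathVertex a 0)) (pathVertex a)
  refine ⟨hinj, fun i j => ?_⟩
  rcases eq_or_ne i j with rfl | hij
  · simp
  have hord : orderOf a = Fintype.card F - 1 := by rw [orderOf_eq_fifteen ha, hF]
  rw [sup_adj, cayley_adj_iff, pathVertex_sub_eq_pow ha hij,
    pow_mem_cubes_iff (by rw [hF]; norm_num) hord, edge_adj]
  simp only [hinj.eq_iff, hinj.ne_iff]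
  revert i j
  decide
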